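/- arXiv:math/0505611 — 2 statements merged into one kernel-verified Lean document; each statement's English description precedes it below -/
import Mathlib

section
/- Let λ and μ be integral partitions. If λ stably embeds into μ (there exists a partition ν with λ×ν ↪ μ×ν), then ‖λ‖_p ≤ ‖μ‖_p for every real p with 1 ≤ p < ∞ and the largest entry of λ is at most the largest entry of μ. -/
/-- An integral partition: a finite (nonempty) multiset of positive integers. -/
def IsPartition (l : Multiset ℕ) : Prop := l ≠ 0 ∧ ∀ x ∈ l, 0 < x

/-- `Embeds l m` : the entries of `l` can be grouped and the groups assigned
bijectively (as a multiset) to the bins of `m`, each group fitting in its bin.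
This is the bin-packing embedding `l ↪ m`. -/
def Embeds (l m : Multiset ℕ) : Prop :=
  ∃ T : Multiset (Multiset ℕ × ℕ),
    (T.map Prod.fst).sum = l ∧ T.map Prod.snd = m ∧ ∀ q ∈ T, q.1.sum ≤ q.2

/-- The product of two partitions: all pairwise products of entries. -/
def mprod (l m : Multiset ℕ) : Multiset ℕ := l.bind fun a => m.map (a * ·)

/-- The `n`-fold product `l^{×n}`. -/
def prodPow (l : Multiset ℕ) : ℕ → Multiset ℕ
  | 0 => {1}
  | n + 1 => mprod l (prodPow l n)

/-- The `p`-norm of a partition: `(∑ λᵢ^p)^(1/p)`. -/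
noncomputable def pnorm (l : Multiset ℕ) (p : ℝ) : ℝ :=
  ((l.map fun a => (a : ℝ) ^ p).sum) ^ (1 / p)

/-- `l ⪯_S m` : for every positive `x`, the sum of the entries of `l` that
are `≥ x` is at most the corresponding sum for `m`. -/
def Supermajorized (l m : Multiset ℕ) : Prop :=
  ∀ x : ℕ, 0 < x →
    ((l.filter fun a => x ≤ a).sum ≤ (m.filter fun a => x ≤ a).sum)

/-- `l s↪ m` : there is a partition `ν` with `l×ν ↪ m×ν`. -/
def StablyEmbeds (l m : Multiset ℕ) : Prop :=
  ∃ ν : Multiset ℕ, IsPartition ν ∧ Embeds (mprod l ν) (mprod m ν)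

/-- `l b↪ m` : for every rational `ε > 0` there are positive integers `N, M`
with `M ≤ N(1+ε)` and `l^{×N} ↪ m^{×M}`. -/
def BulkEmbeds (l m : Multiset ℕ) : Prop :=
  ∀ ε : ℚ, 0 < ε → ∃ N M : ℕ, 0 < N ∧ 0 < M ∧ (M : ℚ) ≤ (N : ℚ) * (1 + ε) ∧
    Embeds (prodPow l N) (prodPow m M)

lemma real_add_rpow_le {x y p : ℝ} (hx : 0 ≤ x) (hy : 0 ≤ y) (hp : 1 ≤ p) :
    x ^ p + y ^ p ≤ (x + y) ^ p := by
  have h := NNReal.add_rpow_le_rpow_add (⟨x, hx⟩ : NNReal) ⟨y, hy⟩ hp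
  exact_mod_cast h

lemma sum_rpow_le (s : Multiset ℕ) (p : ℝ) (hp : 1 ≤ p) :
    ((s.map fun a : ℕ => (a:ℝ)^p).sum) ≤ ((s.sum : ℝ))^p := by
  induction s using Multiset.induction with
  | empty => simp [Real.zero_rpow (by linarith : p ≠ 0)]
  | cons a s ih =>
      simp only [Multiset.map_cons, Multiset.sum_cons, Nat.cast_add]
      calc (a:ℝ)^p + (s.map fun a : ℕ => (a:ℝ)^p).sum ≤ (a:ℝ)^p + ((s.sum:ℝ))^p := by linarith
        _ ≤ ((a:ℝ) + (s.sum:ℝ))^p := real_add_rpow_le (by positivity) (by positivity) hp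

lemma embeds_sum_rpow {A B : Multiset ℕ} (h : Embeds A B) (p : ℝ) (hp : 1 ≤ p) :
    ((A.map fun a : ℕ => (a:ℝ)^p).sum) ≤ ((B.map fun a : ℕ => (a:ℝ)^p).sum) := by
  obtain ⟨T, hA, hB, hle⟩ := h
  rw [← hA, ← hB]
  clear hA hB
  induction T using Multiset.induction with
  | empty => simp
  | cons q T ih =>
      simp only [Multiset.map_cons, Multiset.sum_cons, Multiset.map_add, Multiset.sum_add]
      have h1 : ((q.1.map fun a : ℕ => (a:ℝ)^p).sum) ≤ ((q.2:ℝ))^p := by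
        refine le_trans (sum_rpow_le q.1 p hp) ?_
        exact Real.rpow_le_rpow (by positivity)
          (by exact_mod_cast hle q (Multiset.mem_cons_self q T)) (by linarith)
      have h2 := ih (fun r hr => hle r (Multiset.mem_cons_of_mem hr))
      linarith

lemma embeds_sup_le {A B : Multiset ℕ} (h : Embeds A B) : A.sup ≤ B.sup := by
  obtain ⟨T, hA, hB, hle⟩ := h
  refine Multiset.sup_le.2 fun x hx => ?_
  rw [← hA] at hx
  obtain ⟨s, hs, hxs⟩ := Multiset.mem_join.1 hx
  obtain ⟨q, hq, rfl⟩ := Multiset.mem_map.1 hs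
  calc x ≤ q.1.sum := Multiset.single_le_sum (fun y _ => Nat.zero_le y) x hxs
    _ ≤ q.2 := hle q hq
    _ ≤ B.sup := Multiset.le_sup (by rw [← hB]; exact Multiset.mem_map_of_mem _ hq)

lemma mem_mprod {a b : ℕ} {l ν : Multiset ℕ} (ha : a ∈ l) (hb : b ∈ ν) :
    a * b ∈ mprod l ν :=
  Multiset.mem_bind.2 ⟨a, ha, Multiset.mem_map.2 ⟨b, hb, rfl⟩⟩

lemma mprod_sup_le (l ν : Multiset ℕ) : (mprod l ν).sup ≤ l.sup * ν.sup := by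
  refine Multiset.sup_le.2 fun x hx => ?_
  obtain ⟨a, ha, b, hb, rfl⟩ := by
    simpa [mprod, Multiset.mem_bind, Multiset.mem_map] using hx
  exact Nat.mul_le_mul (Multiset.le_sup ha) (Multiset.le_sup hb)

lemma mprod_sum_rpow (l ν : Multiset ℕ) (p : ℝ) :
    (((mprod l ν).map fun a : ℕ => (a:ℝ)^p).sum)
      = ((l.map fun a : ℕ => (a:ℝ)^p).sum) * ((ν.map fun a : ℕ => (a:ℝ)^p).sum) := by
  induction l using Multiset.induction with
  | empty => simp [mprod]
  | cons a l ih =>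
      rw [show mprod (a ::ₘ l) ν = ν.map (a * ·) + mprod l ν from Multiset.cons_bind _ _ _]
      rw [Multiset.map_add, Multiset.sum_add, ih, Multiset.map_cons, Multiset.sum_cons,
        add_mul, Multiset.map_map]
      congr 1
      have : ((ν.map ((fun x : ℕ => (x:ℝ)^p) ∘ (a * ·))).sum)
          = ((ν.map fun b : ℕ => (a:ℝ)^p * (b:ℝ)^p).sum) := by
        congr 1
        apply Multiset.map_congr rfl
        intro b _
        simp only [Function.comp_apply, Nat.cast_mul]
        rw [Real.mul_rpow (by positivity) (by positivity)]
      rw [this, Multiset.sum_map_mul_left]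

lemma sup_mem {s : Multiset ℕ} (h : s ≠ 0) : s.sup ∈ s := by
  induction s using Multiset.induction with
  | empty => simp at h
  | cons a s ih =>
      rcases eq_or_ne s 0 with rfl | hs
      · simp
      · rw [Multiset.sup_cons]
        rcases le_total a s.sup with h1 | h1
        · rw [sup_eq_right.2 h1]; exact Multiset.mem_cons_of_mem (ih hs)
        · rw [sup_eq_left.2 h1]; exact Multiset.mem_cons_self a s

/-- If `λ s↪ μ`, then `‖λ‖_p ≤ ‖μ‖_p` for all `1 ≤ p < ∞` and the largest
entry of `λ` is at most the largest entry of `μ`. -/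
theorem stmt_5 (l m : Multiset ℕ) (hl : IsPartition l) (hm : IsPartition m)
    (hs : StablyEmbeds l m) :
    (∀ p : ℝ, 1 ≤ p → pnorm l p ≤ pnorm m p) ∧ l.sup ≤ m.sup := by
  obtain ⟨ν, ⟨hν0, hνpos⟩, hemb⟩ := hs
  constructor
  · intro p hp
    obtain ⟨b, hb⟩ := Multiset.exists_mem_of_ne_zero hν0
    have key := embeds_sum_rpow hemb p hp
    rw [mprod_sum_rpow, mprod_sum_rpow] at key
    have hSν : 0 < ((ν.map fun a : ℕ => (a:ℝ)^p).sum) := by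
      have hbpos : (0:ℝ) < (b:ℝ)^p :=
        Real.rpow_pos_of_pos (by exact_mod_cast hνpos b hb) p
      have hle : (b:ℝ)^p ≤ (ν.map fun a : ℕ => (a:ℝ)^p).sum :=
        Multiset.single_le_sum (fun y hy => by
          obtain ⟨c, _, rfl⟩ := Multiset.mem_map.1 hy; positivity) _
          (Multiset.mem_map_of_mem _ hb)
      linarith
    have hlm : ((l.map fun a : ℕ => (a:ℝ)^p).sum) ≤ ((m.map fun a : ℕ => (a:ℝ)^p).sum) :=
      le_of_mul_le_mul_right key hSν
    have hpn : ∀ s : Multiset ℕ, pnorm s p = ((s.map fun a : ℕ => (a:ℝ)^p).sum) ^ (1/p) := by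
      intro s
      unfold pnorm
      congr 1
      simp [Multiset.bind_singleton, Multiset.map_map, Function.comp]
    rw [hpn, hpn]
    refine Real.rpow_le_rpow ?_ hlm (by positivity)
    refine Multiset.sum_nonneg fun y hy => ?_
    obtain ⟨c, _, rfl⟩ := Multiset.mem_map.1 hy
    positivity
  · have hνsup : ν.sup ∈ ν := sup_mem hν0
    have hνsuppos : 0 < ν.sup := hνpos _ hνsup
    have hlsup : l.sup ∈ l := sup_mem hl.1
    have h1 : l.sup * ν.sup ≤ (mprod l ν).sup :=
      Multiset.le_sup (mem_mprod hlsup hνsup)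
    have h2 : l.sup * ν.sup ≤ m.sup * ν.sup :=
      le_trans h1 (le_trans (embeds_sup_le hemb) (mprod_sup_le m ν))
    exact Nat.le_of_mul_le_mul_right h2 hνsuppos
end

section
/- Fix an integer p ≥ 2, and let λ and μ be integral partitions all of whose entries are powers of p. If λ stably embeds into μ (there exists some partition ν with λ×ν ↪ μ×ν), then there exists a partition ν all of whose entries are powers of p such that λ×ν embeds into μ×ν. -/
/-!
A stable embedding `λ×ν ↪ μ×ν` forces `λ×ν ⪯_S μ×ν`, and for partitions of powers of `p`
supermajorization already implies embedding: put the largest part `p^i` into a bin `p^j ≥ p^i`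
and split the rest `p^j - p^i` into powers of `p` that are all `≥ p^i`, which keeps
supermajorization. So it suffices to replace `ν` by a partition of powers of `p` that scales the
tail sums of `λ×ν` and `μ×ν` at every threshold `p^k` by the same factor. Replacing each `b ∈ ν`
by `b·p^(M - ⌊log_p b⌋)` copies of `p^⌊log_p b⌋` does this with factor `p^M`: `p^i·b` and
`p^i·p^⌊log_p b⌋` clear the same thresholds `p^k`.
-/

open Multiset

def tailSum (x : ℕ) (s : Multiset ℕ) : ℕ := (s.filter (x ≤ ·)).sum

section TailSum

variable (x : ℕ)

@[simp] lemma tailSum_zero : tailSum x 0 = 0 := rfl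

@[simp] lemma tailSum_add (s t : Multiset ℕ) : tailSum x (s + t) = tailSum x s + tailSum x t := by
  simp [tailSum, filter_add]

@[simp] lemma tailSum_cons (a : ℕ) (s : Multiset ℕ) :
    tailSum x (a ::ₘ s) = (if x ≤ a then a else 0) + tailSum x s := by
  by_cases h : x ≤ a <;> simp [tailSum, h]

@[simp] lemma tailSum_singleton (a : ℕ) : tailSum x {a} = if x ≤ a then a else 0 := by
  simp [← cons_zero]

lemma tailSum_bind {α : Type*} (s : Multiset α) (f : α → Multiset ℕ) :
    tailSum x (s.bind f) = (s.map fun a => tailSum x (f a)).sum := by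
  simp [tailSum, filter_bind]

lemma tailSum_map {α : Type*} (s : Multiset α) (f : α → ℕ) :
    tailSum x (s.map f) = (s.map fun a => tailSum x {f a}).sum := by
  rw [← bind_singleton, tailSum_bind]

lemma tailSum_sum (s : Multiset (Multiset ℕ)) :
    tailSum x s.sum = (s.map (tailSum x)).sum := by
  induction s using Multiset.induction with
  | empty => simp
  | cons t s ih => simp [ih]

lemma tailSum_replicate (n a : ℕ) :
    tailSum x (replicate n a) = if x ≤ a then n * a else 0 := by
  induction n with
  | zero => simp
  | succ n ih => split_ifs at ih ⊢ <;> simp [replicate_succ, *, add_mul, add_comm]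

lemma tailSum_le_sum (s : Multiset ℕ) : tailSum x s ≤ s.sum := by
  conv_rhs => rw [← filter_add_not (x ≤ ·) s, sum_add]
  exact Nat.le_add_right _ _

lemma tailSum_eq_sum {s : Multiset ℕ} (h : ∀ a ∈ s, x ≤ a) : tailSum x s = s.sum := by
  rw [tailSum, filter_eq_self.mpr h]

lemma tailSum_eq_zero {s : Multiset ℕ} (h : ∀ a ∈ s, a < x) : tailSum x s = 0 := by
  rw [tailSum, filter_eq_nil.mpr fun a ha => (h a ha).not_ge, sum_zero]

lemma tailSum_le_tailSum_singleton {s : Multiset ℕ} {b : ℕ} (h : s.sum ≤ b) :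
    tailSum x s ≤ tailSum x {b} := by
  rw [tailSum_singleton]
  split_ifs with hx
  · exact (tailSum_le_sum x s).trans h
  · exact (tailSum_eq_zero x fun a ha => ((le_sum_of_mem ha).trans h).trans_lt (not_le.mp hx)).le

end TailSum

lemma supermajorized_iff {l m : Multiset ℕ} :
    Supermajorized l m ↔ ∀ x, 0 < x → tailSum x l ≤ tailSum x m := Iff.rfl

theorem Embeds.supermajorized {l m : Multiset ℕ} (h : Embeds l m) : Supermajorized l m := by
  obtain ⟨T, rfl, rfl, hT⟩ := h
  refine supermajorized_iff.mpr fun x _ => ?_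
  rw [tailSum_sum, tailSum_map, map_map]
  exact sum_map_le_sum_map _ _ fun q hq => tailSum_le_tailSum_singleton x (hT q hq)

theorem Supermajorized.exists_mem_le {l m : Multiset ℕ} (h : Supermajorized l m) {a : ℕ}
    (ha : a ∈ l) (ha0 : 0 < a) : ∃ b ∈ m, a ≤ b := by
  by_contra! hm
  have hla : a ≤ tailSum a l := le_sum_of_mem (mem_filter.mpr ⟨ha, le_rfl⟩)
  have := supermajorized_iff.mp h a ha0
  rw [tailSum_eq_zero a hm] at this
  omega

theorem Supermajorized.erase_of_forall_le {l m d : Multiset ℕ} {a b : ℕ}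
    (h : Supermajorized l m) (ha : a ∈ l) (hmax : ∀ c ∈ l, c ≤ a) (hb : b ∈ m)
    (hd : ∀ c ∈ d, a ≤ c) (hab : a + d.sum = b) :
    Supermajorized (l.erase a) (m.erase b + d) := by
  refine supermajorized_iff.mpr fun x hx => ?_
  by_cases hxa : x ≤ a
  · have hlm := supermajorized_iff.mp h x hx
    rw [← cons_erase ha, ← cons_erase hb, tailSum_cons, tailSum_cons, if_pos hxa,
      if_pos (hxa.trans (hab ▸ Nat.le_add_right a _))] at hlm
    rw [tailSum_add, tailSum_eq_sum x fun c hc => hxa.trans (hd c hc)]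
    omega
  · rw [tailSum_eq_zero x fun c hc => (hmax c (mem_of_mem_erase hc)).trans_lt (not_le.mp hxa)]
    exact Nat.zero_le _

theorem embeds_zero_left (m : Multiset ℕ) : Embeds 0 m :=
  ⟨m.map fun b => (0, b), by simp, by simp, by simp⟩

theorem Multiset.exists_eq_add_of_map_eq_add {α β : Type*} [DecidableEq α] {f : α → β}
    {s : Multiset α} {u v : Multiset β} (h : s.map f = u + v) :
    ∃ s₁ s₂, s = s₁ + s₂ ∧ s₁.map f = u ∧ s₂.map f = v := by
  induction u using Multiset.induction generalizing s with
  | empty => exact ⟨0, s, by simp, by simp, by simpa using h⟩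
  | cons y u ih =>
    obtain ⟨a, ha, rfl⟩ := mem_map.mp (h ▸ mem_add.mpr (Or.inl (mem_cons_self y u)))
    rw [← cons_erase ha, map_cons, cons_add, cons_inj_right] at h
    obtain ⟨s₁, s₂, hs, rfl, rfl⟩ := ih h
    exact ⟨a ::ₘ s₁, s₂, by rw [← cons_erase ha, hs, cons_add], by simp, rfl⟩

theorem Embeds.cons_of_add {l m d : Multiset ℕ} {a b : ℕ} (h : Embeds l (m + d))
    (hab : a + d.sum ≤ b) : Embeds (a ::ₘ l) (b ::ₘ m) := by
  obtain ⟨T, hl, hmd, hT⟩ := h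
  obtain ⟨T₁, T₂, rfl, rfl, rfl⟩ := exists_eq_add_of_map_eq_add hmd
  refine ⟨(a ::ₘ (T₂.map Prod.fst).sum, b) ::ₘ T₁, ?_, by simp, ?_⟩
  · rw [← hl]
    simp [add_comm]
  · intro q hq
    rcases mem_cons.mp hq with rfl | hq
    · have : ((T₂.map Prod.fst).sum).sum ≤ (T₂.map Prod.snd).sum := by
        rw [← join, sum_join, map_map]
        exact sum_map_le_sum_map _ _ fun q hq => hT q (mem_add.mpr (Or.inr hq))
      simp only [sum_cons]
      omega
    · exact hT q (mem_add.mpr (Or.inl hq))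

theorem exists_pow_add_sum_eq_pow {p i j : ℕ} (hp : 0 < p) (hij : i ≤ j) :
    ∃ d : Multiset ℕ, (∀ c ∈ d, ∃ t, i ≤ t ∧ c = p ^ t) ∧ p ^ i + d.sum = p ^ j := by
  induction j, hij using Nat.le_induction with
  | base => exact ⟨0, by simp, by simp⟩
  | succ j hij ih =>
    obtain ⟨d, hd, hsum⟩ := ih
    refine ⟨replicate (p - 1) (p ^ j) + d, fun c hc => ?_, ?_⟩
    · rcases mem_add.mp hc with hc | hc
      · exact ⟨j, hij, eq_of_mem_replicate hc⟩
      · exact hd c hc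
    · obtain ⟨q, rfl⟩ : ∃ q, p = q + 1 := ⟨p - 1, by omega⟩
      rw [sum_add, sum_replicate, smul_eq_mul, pow_succ, Nat.add_sub_cancel]
      linarith

theorem Supermajorized.embeds_of_pow {p : ℕ} (hp : 1 < p) {l m : Multiset ℕ}
    (hlp : ∀ x ∈ l, ∃ i, x = p ^ i) (hmp : ∀ x ∈ m, ∃ i, x = p ^ i)
    (h : Supermajorized l m) : Embeds l m := by
  induction hn : card l generalizing l m with
  | zero => exact card_eq_zero.mp hn ▸ embeds_zero_left m
  | succ n ih =>
    obtain ⟨a, ha, hmax⟩ :=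
      l.toFinset.exists_max_image id (toFinset_nonempty.mpr (card_pos.mp (by omega)))
    rw [mem_toFinset] at ha
    obtain ⟨i, rfl⟩ := hlp a ha
    obtain ⟨b, hb, hab⟩ := h.exists_mem_le ha (pow_pos (by omega) i)
    obtain ⟨j, rfl⟩ := hmp b hb
    obtain ⟨d, hd, hsum⟩ :=
      exists_pow_add_sum_eq_pow (p := p) (by omega) ((Nat.pow_le_pow_iff_right hp).mp hab)
    have hdp : ∀ c ∈ d, p ^ i ≤ c ∧ ∃ t, c = p ^ t := fun c hc => by
      obtain ⟨t, hit, rfl⟩ := hd c hc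
      exact ⟨Nat.pow_le_pow_right (by omega) hit, t, rfl⟩
    rw [← cons_erase ha, ← cons_erase hb]
    refine Embeds.cons_of_add (ih (fun x hx => hlp x (mem_of_mem_erase hx)) ?_
      (h.erase_of_forall_le ha (by simpa using hmax) hb (fun c hc => (hdp c hc).1) hsum) ?_)
      hsum.le
    · intro x hx
      rcases mem_add.mp hx with hx | hx
      · exact hmp x (mem_of_mem_erase hx)
      · exact (hdp x hx).2
    · rw [card_erase_of_mem ha, hn, Nat.pred_succ]

theorem tailSum_eq_tailSum_pow_clog {p : ℕ} (hp : 1 < p) (x : ℕ) {s : Multiset ℕ}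
    (hs : ∀ a ∈ s, ∃ i, a = p ^ i) : tailSum x s = tailSum (p ^ Nat.clog p x) s := by
  refine congrArg sum (filter_congr fun a ha => ?_)
  obtain ⟨i, rfl⟩ := hs a ha
  rw [← Nat.clog_le_iff_le_pow hp, Nat.pow_le_pow_iff_right hp]

theorem supermajorized_of_tailSum_pow_le {p : ℕ} (hp : 1 < p) {l m : Multiset ℕ}
    (hlp : ∀ x ∈ l, ∃ i, x = p ^ i) (hmp : ∀ x ∈ m, ∃ i, x = p ^ i)
    (h : ∀ k, tailSum (p ^ k) l ≤ tailSum (p ^ k) m) : Supermajorized l m :=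
  supermajorized_iff.mpr fun x _ => by
    rw [tailSum_eq_tailSum_pow_clog hp x hlp, tailSum_eq_tailSum_pow_clog hp x hmp]
    exact h _

theorem forall_mem_mprod_pow {p : ℕ} {l ν : Multiset ℕ} (hl : ∀ x ∈ l, ∃ i, x = p ^ i)
    (hν : ∀ x ∈ ν, ∃ i, x = p ^ i) : ∀ x ∈ mprod l ν, ∃ i, x = p ^ i := by
  simp only [mprod, mem_bind, mem_map]
  rintro _ ⟨a, ha, c, hc, rfl⟩
  obtain ⟨i, rfl⟩ := hl a ha
  obtain ⟨t, rfl⟩ := hν c hc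
  exact ⟨i + t, (pow_add p i t).symm⟩

theorem pow_le_pow_mul_pow_log_iff {p : ℕ} (hp : 1 < p) {b : ℕ} (hb : b ≠ 0) (i k : ℕ) :
    p ^ k ≤ p ^ i * p ^ Nat.log p b ↔ p ^ k ≤ p ^ i * b := by
  refine ⟨fun h => h.trans (Nat.mul_le_mul_left _ (Nat.pow_log_le_self p hb)), fun h => ?_⟩
  have hlt : p ^ k < p ^ (i + (Nat.log p b + 1)) := by
    rw [pow_add]
    exact h.trans_lt (Nat.mul_lt_mul_of_pos_left (Nat.lt_pow_succ_log_self hp b)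
      (pow_pos (by omega) i))
  rw [← pow_add]
  exact Nat.pow_le_pow_right (by omega) (by have := (Nat.pow_lt_pow_iff_right hp).mp hlt; omega)

def powRefine (p M : ℕ) (ν : Multiset ℕ) : Multiset ℕ :=
  ν.bind fun b => replicate (b * p ^ (M - Nat.log p b)) (p ^ Nat.log p b)

theorem forall_mem_powRefine (p M : ℕ) (ν : Multiset ℕ) :
    ∀ x ∈ powRefine p M ν, ∃ i, x = p ^ i := by
  simp only [powRefine, mem_bind]
  rintro x ⟨b, -, hx⟩
  exact ⟨_, eq_of_mem_replicate hx⟩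

theorem isPartition_powRefine {p : ℕ} (hp : 0 < p) (M : ℕ) {ν : Multiset ℕ}
    (hν : IsPartition ν) : IsPartition (powRefine p M ν) := by
  obtain ⟨b, hb⟩ := exists_mem_of_ne_zero hν.1
  have hmem : p ^ Nat.log p b ∈ powRefine p M ν := mem_bind.mpr
    ⟨b, hb, mem_replicate.mpr ⟨(Nat.mul_pos (hν.2 b hb) (pow_pos hp _)).ne', rfl⟩⟩
  refine ⟨fun h0 => notMem_zero _ (h0 ▸ hmem), fun x hx => ?_⟩
  obtain ⟨i, rfl⟩ := forall_mem_powRefine p M ν x hx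
  exact pow_pos hp i

theorem tailSum_pow_mprod_powRefine {p M : ℕ} (hp : 1 < p) {ν w : Multiset ℕ}
    (hν : ∀ b ∈ ν, b ≠ 0 ∧ Nat.log p b ≤ M) (hw : ∀ a ∈ w, ∃ i, a = p ^ i) (k : ℕ) :
    tailSum (p ^ k) (mprod w (powRefine p M ν)) = p ^ M * tailSum (p ^ k) (mprod w ν) := by
  simp only [mprod, tailSum_bind, ← sum_map_mul_left]
  refine congrArg sum (map_congr rfl fun a ha => ?_)
  obtain ⟨i, rfl⟩ := hw a ha
  rw [powRefine, map_bind, tailSum_bind, tailSum_map, ← sum_map_mul_left]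
  refine congrArg sum (map_congr rfl fun b hb => ?_)
  rw [map_replicate, tailSum_replicate, tailSum_singleton]
  simp only [pow_le_pow_mul_pow_log_iff hp (hν b hb).1]
  split_ifs
  · calc b * p ^ (M - Nat.log p b) * (p ^ i * p ^ Nat.log p b)
        = p ^ (M - Nat.log p b + Nat.log p b) * (p ^ i * b) := by ring
      _ = p ^ M * (p ^ i * b) := by rw [Nat.sub_add_cancel (hν b hb).2]
  · rfl

theorem stmt_12_general (p : ℕ) (hp : 2 ≤ p) (l m : Multiset ℕ)
    (hlp : ∀ x ∈ l, ∃ i : ℕ, x = p ^ i) (hmp : ∀ x ∈ m, ∃ i : ℕ, x = p ^ i)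
    (hs : StablyEmbeds l m) :
    ∃ ν : Multiset ℕ, IsPartition ν ∧ (∀ x ∈ ν, ∃ i : ℕ, x = p ^ i) ∧
      Embeds (mprod l ν) (mprod m ν) := by
  obtain ⟨ν, hν, hemb⟩ := hs
  set M := Nat.log p ν.sum
  have hνM : ∀ b ∈ ν, b ≠ 0 ∧ Nat.log p b ≤ M :=
    fun b hb => ⟨(hν.2 b hb).ne', Nat.log_mono_right (le_sum_of_mem hb)⟩
  have hpow := forall_mem_powRefine p M ν
  refine ⟨powRefine p M ν, isPartition_powRefine (by omega) M hν, hpow, ?_⟩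
  refine Supermajorized.embeds_of_pow hp (forall_mem_mprod_pow hlp hpow)
    (forall_mem_mprod_pow hmp hpow) ?_
  refine supermajorized_of_tailSum_pow_le hp (forall_mem_mprod_pow hlp hpow)
    (forall_mem_mprod_pow hmp hpow) fun k => ?_
  rw [tailSum_pow_mprod_powRefine hp hνM hlp, tailSum_pow_mprod_powRefine hp hνM hmp]
  exact Nat.mul_le_mul_left _ (supermajorized_iff.mp hemb.supermajorized _ (pow_pos (by omega) k))

/-- For partitions whose entries are powers of a fixed `p ≥ 2`, if `λ s↪ μ`
then the auxiliary partition `ν` can be chosen with all entries powers of `p`. -/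
theorem stmt_12 (p : ℕ) (hp : 2 ≤ p) (l m : Multiset ℕ)
    (hl : IsPartition l) (hm : IsPartition m)
    (hlp : ∀ x ∈ l, ∃ i : ℕ, x = p ^ i) (hmp : ∀ x ∈ m, ∃ i : ℕ, x = p ^ i)
    (hs : StablyEmbeds l m) :
    ∃ ν : Multiset ℕ, IsPartition ν ∧ (∀ x ∈ ν, ∃ i : ℕ, x = p ^ i) ∧
      Embeds (mprod l ν) (mprod m ν) :=
  stmt_12_general p hp l m hlp hmp hs
end
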